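/- In ℝ⁶ with coordinates (d0, d1, d2, d3, d4, d5), consider the following 21 vectors: for each 1 ≤ i ≤ 5, the vector with d0 = 0, d_i = 1 and all other coordinates 0; for each 1 ≤ i ≤ 5, the vector with d0 = 1, d_i = 0 and d_j = 1 for all j ≠ i; for each pair 1 ≤ i < j ≤ 5, the vector with d0 = 1, d_i = d_j = 0 and d_k = 1 for all k ∉ {i, j}; and the vector with d0 = 2 and d_i = 1 for all 1 ≤ i ≤ 5. A vector (d0, d1, …, d5) ∈ ℝ⁶ is a finite nonnegative linear combination of these 21 vectors if and only if all of the following hold: d0 ≥ 0; d_i ≥ 0 for all 1 ≤ i ≤ 5; d_i + d_j + d_k ≥ d0 for all pairwise distinct i, j, k ∈ {1, …, 5}; d_i + d_j + d_k + d_l ≥ 2d0 for all pairwise distinct i, j, k, l ∈ {1, …, 5}; and 2d_i + ∑_{j ≠ i} d_j ≥ 3d0 for each 1 ≤ i ≤ 5. -/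

import Mathlib

open scoped BigOperators

/-- In coordinates `(d0, d1, …, d5)` on `ℝ⁶` (index `0` is `d0`, index `i.succ` is `dᵢ`):
the generator `Eᵢ`, i.e. the vector with `d0 = 0`, `dᵢ = 1` and other coordinates `0`. -/
noncomputable def genA (i : Fin 5) : Fin 6 → ℝ := fun j => if j = i.succ then 1 else 0

/-- The generator `H - Eᵢ`: `d0 = 1`, `dᵢ = 0` and `dⱼ = 1` for `j ≠ i`. -/
noncomputable def genB (i : Fin 5) : Fin 6 → ℝ := fun j =>
  if j = 0 then 1 else if j = i.succ then 0 else 1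

/-- The generator `H - Eᵢ - Eⱼ` (for `i ≠ j`): `d0 = 1`, `dᵢ = dⱼ = 0` and `dₖ = 1`
for `k ∉ {i, j}`. -/
noncomputable def genC (i j : Fin 5) : Fin 6 → ℝ := fun m =>
  if m = 0 then 1 else if m = i.succ ∨ m = j.succ then 0 else 1

/-- The generator `2H - E₁ - ⋯ - E₅`: `d0 = 2` and `dᵢ = 1` for all `i`. -/
noncomputable def genD : Fin 6 → ℝ := fun j => if j = 0 then 2 else 1

/-!
Write a class as `∑ aₖ Eₖ + ∑ cᵢⱼ (H - Eᵢ - Eⱼ) + e (2H - ∑ Eₖ)`, where `H - Eᵢ` is the case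
`i = j`, and read `c` as a weighted multigraph with loops on the five indices. Then `d₀` is the
total weight of `c` plus `2e`, and `dₖ` is the total weight minus the degree of `k`, plus
`aₖ + e`. Since an edge meets at most two vertices of any set, the inequalities follow.

Conversely, sort the `dₖ` and take `e = max 0 (3d₀ - ∑ dₖ)`. The inequalities then say that
the demands `max 0 (d₀ - e - dₖ)` are at most `d₀ - 2e` each and at most `2(d₀ - 2e)` in total,
and such demands are met by a multigraph of total weight `d₀ - 2e`: a star, or a star together
with two disjoint edges.
-/

open Finset

theorem Finset.sum_sum_eq_sum_diag_add_sum_lt {ι M : Type*} [Fintype ι] [LinearOrder ι]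
    [AddCommMonoid M] (f : ι → ι → M) :
    ∑ i, ∑ j, f i j = ∑ i, f i i + ∑ i, ∑ j ∈ univ.filter (fun j => i < j), (f i j + f j i) := by
  have hsplit : ∀ i j, f i j = (if i = j then f i j else 0) + (if i < j then f i j else 0) +
      (if j < i then f i j else 0) := by
    intro i j
    rcases lt_trichotomy i j with h | rfl | h
    · simp [h, h.ne, h.not_gt]
    · simp
    · simp [h, h.ne', h.not_gt]
  rw [sum_congr rfl fun i _ => sum_congr rfl fun j _ => hsplit i j]
  simp only [sum_add_distrib, sum_filter, sum_ite_eq, mem_univ, if_true, add_assoc]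
  rw [sum_comm (f := fun i j => if j < i then f i j else 0)]

lemma genC_self (i : Fin 5) : genC i i = genB i := by
  funext m
  simp [genC, genB]

lemma genC_comm (i j : Fin 5) : genC i j = genC j i := by
  funext m
  simp [genC, or_comm]

noncomputable def conePoint (a : Fin 5 → ℝ) (c : Fin 5 → Fin 5 → ℝ) (e : ℝ) : Fin 6 → ℝ :=
  ∑ i, a i • genA i + ∑ i, ∑ j, c i j • genC i j + e • genD

lemma exists_genB_genC_iff_exists_conePoint (v : Fin 6 → ℝ) :
    (∃ (a b : Fin 5 → ℝ) (c : Fin 5 → Fin 5 → ℝ) (e : ℝ),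
      (∀ i, 0 ≤ a i) ∧ (∀ i, 0 ≤ b i) ∧ (∀ i j, 0 ≤ c i j) ∧ 0 ≤ e ∧
      v = (∑ i, a i • genA i) + (∑ i, b i • genB i) +
          (∑ i, ∑ j ∈ univ.filter (fun j => i < j), c i j • genC i j) + e • genD) ↔
    ∃ (a : Fin 5 → ℝ) (c : Fin 5 → Fin 5 → ℝ) (e : ℝ),
      0 ≤ a ∧ 0 ≤ c ∧ 0 ≤ e ∧ v = conePoint a c e := by
  simp only [conePoint, sum_sum_eq_sum_diag_add_sum_lt fun i j => _ • genC i j, genC_self]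
  constructor
  · rintro ⟨a, b, c, e, ha, hb, hc, he, rfl⟩
    refine ⟨a, fun i j => if i = j then b i else if i < j then c i j else 0, e, ha,
      fun i j => ?_, he, ?_⟩
    · dsimp only
      split_ifs
      exacts [hb i, hc i j, le_rfl]
    · rw [add_assoc _ (∑ i, b i • genB i)]
      congr 3
      refine sum_congr rfl fun i _ => sum_congr rfl fun j hj => ?_
      have hij : i < j := (mem_filter.mp hj).2
      simp [hij, hij.ne, hij.ne', hij.not_gt]
  · rintro ⟨a, c, e, ha, hc, he, rfl⟩
    refine ⟨a, fun i => c i i, fun i j => c i j + c j i, e, ha, fun i => hc i i,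
      fun i j => add_nonneg (hc i j) (hc j i), he, ?_⟩
    simp only [add_smul, add_assoc, genC_comm]

/-- The weighted degree of `k` when `c i j` is the weight of an edge `{i, j}`; a loop `{k, k}`
counts once. -/
def edgeDegree {ι : Type*} [Fintype ι] [DecidableEq ι] (c : ι → ι → ℝ) (k : ι) : ℝ :=
  ∑ i, ∑ j, if k = i ∨ k = j then c i j else 0

section EdgeDegree

variable {ι : Type*} [Fintype ι] [DecidableEq ι] {c : ι → ι → ℝ}

lemma edgeDegree_le_sum (hc : 0 ≤ c) (k : ι) : edgeDegree c k ≤ ∑ i, ∑ j, c i j :=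
  sum_le_sum fun i _ => sum_le_sum fun j _ => by
    split_ifs
    exacts [le_rfl, hc i j]

lemma sum_edgeDegree_le (hc : 0 ≤ c) (S : Finset ι) :
    ∑ k ∈ S, edgeDegree c k ≤ 2 * ∑ i, ∑ j, c i j := by
  simp only [edgeDegree]
  rw [sum_comm, mul_sum]
  refine sum_le_sum fun i _ => ?_
  rw [sum_comm, mul_sum]
  refine sum_le_sum fun j _ => ?_
  rw [← sum_filter, sum_const, nsmul_eq_mul]
  refine mul_le_mul_of_nonneg_right ?_ (hc i j)
  exact_mod_cast (card_le_card fun k hk => by simpa using (mem_filter.mp hk).2).trans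
    (card_le_two (a := i) (b := j))

lemma edgeDegree_comp_perm (c : ι → ι → ℝ) (σ : Equiv.Perm ι) (k : ι) :
    edgeDegree (fun i j => c (σ i) (σ j)) k = edgeDegree c (σ k) :=
  Fintype.sum_equiv σ _ _ fun i => Fintype.sum_equiv σ _ _ fun j => by
    simp [σ.apply_eq_iff_eq]

end EdgeDegree

lemma conePoint_zero (a : Fin 5 → ℝ) (c : Fin 5 → Fin 5 → ℝ) (e : ℝ) :
    conePoint a c e 0 = ∑ i, ∑ j, c i j + 2 * e := by
  simp [conePoint, genA, genC, genD, Finset.sum_apply, mul_comm, (Fin.succ_ne_zero _).symm]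

lemma conePoint_succ (a : Fin 5 → ℝ) (c : Fin 5 → Fin 5 → ℝ) (e : ℝ) (k : Fin 5) :
    conePoint a c e k.succ = a k + (∑ i, ∑ j, c i j - edgeDegree c k) + e := by
  simp only [conePoint, edgeDegree, genA, genC, genD, Pi.add_apply, Finset.sum_apply,
    Pi.smul_apply, smul_eq_mul, Fin.succ_inj, Fin.succ_ne_zero, if_false, ← sum_sub_distrib]
  congr 2
  · simp
  · refine sum_congr rfl fun i _ => sum_congr rfl fun j _ => ?_
    split_ifs <;> simp
  · simp

/-- Membership in the cone, with the coefficients of the `Eₖ` eliminated. -/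
def IsEffective (d₀ : ℝ) (d : Fin 5 → ℝ) : Prop :=
  ∃ c : Fin 5 → Fin 5 → ℝ, 0 ≤ c ∧ ∃ e : ℝ, 0 ≤ e ∧
    d₀ = ∑ i, ∑ j, c i j + 2 * e ∧ ∀ k, ∑ i, ∑ j, c i j + e ≤ d k + edgeDegree c k

lemma exists_conePoint_iff_isEffective (v : Fin 6 → ℝ) :
    (∃ (a : Fin 5 → ℝ) (c : Fin 5 → Fin 5 → ℝ) (e : ℝ),
      0 ≤ a ∧ 0 ≤ c ∧ 0 ≤ e ∧ v = conePoint a c e) ↔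
    IsEffective (v 0) (fun k => v k.succ) := by
  constructor
  · rintro ⟨a, c, e, ha, hc, he, rfl⟩
    refine ⟨c, hc, e, he, conePoint_zero a c e, fun k => ?_⟩
    have hak : 0 ≤ a k := ha k
    linarith [conePoint_succ a c e k]
  · rintro ⟨c, hc, e, he, h₀, hd⟩
    refine ⟨fun k => v k.succ + edgeDegree c k - ∑ i, ∑ j, c i j - e, c, e,
      fun k => sub_nonneg.mpr (by linarith [hd k]), hc, he, funext fun m => ?_⟩
    induction m using Fin.cases with
    | zero => rw [conePoint_zero, h₀]
    | succ k => rw [conePoint_succ]; ring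

def SatisfiesConeInequalities (d₀ : ℝ) (d : Fin 5 → ℝ) : Prop :=
  0 ≤ d₀ ∧ (∀ i, 0 ≤ d i) ∧
    (∀ i j k : Fin 5, i ≠ j → i ≠ k → j ≠ k → d₀ ≤ d i + d j + d k) ∧
    (∀ i j k l : Fin 5, i ≠ j → i ≠ k → i ≠ l → j ≠ k → j ≠ l → k ≠ l →
      2 * d₀ ≤ d i + d j + d k + d l) ∧
    (∀ i : Fin 5, 3 * d₀ ≤ 2 * d i + ∑ j ∈ univ.erase i, d j)

lemma IsEffective.satisfiesConeInequalities {d₀ : ℝ} {d : Fin 5 → ℝ} (h : IsEffective d₀ d) :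
    SatisfiesConeInequalities d₀ d := by
  obtain ⟨c, hc, e, he, rfl, hd⟩ := h
  have hN : 0 ≤ ∑ i, ∑ j, c i j := sum_nonneg fun i _ => sum_nonneg fun j _ => hc i j
  refine ⟨by positivity, fun i => ?_, fun i j k hij hik hjk => ?_,
    fun i j k l hij hik hil hjk hjl hkl => ?_, fun i => ?_⟩
  · linarith [hd i, edgeDegree_le_sum hc i]
  · have := sum_edgeDegree_le hc {i, j, k}
    rw [sum_insert (by simp [hij, hik]), sum_insert (by simp [hjk]), sum_singleton] at this
    linarith [hd i, hd j, hd k]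
  · have := sum_edgeDegree_le hc {i, j, k, l}
    rw [sum_insert (by simp [hij, hik, hil]), sum_insert (by simp [hjk, hjl]),
      sum_insert (by simp [hkl]), sum_singleton] at this
    linarith [hd i, hd j, hd k, hd l]
  · have hrest : 4 * (∑ i, ∑ j, c i j + e) ≤
        (∑ k, d k - d i) + (∑ k, edgeDegree c k - edgeDegree c i) := by
      rw [← sum_erase_eq_sub (mem_univ i), ← sum_erase_eq_sub (mem_univ i), ← sum_add_distrib]
      calc 4 * (∑ i, ∑ j, c i j + e)
          _ = ∑ k ∈ univ.erase i, (∑ i, ∑ j, c i j + e) := by simp [mul_add]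
          _ ≤ _ := sum_le_sum fun k _ => hd k
    rw [sum_erase_eq_sub (mem_univ i)]
    linarith [hd i, edgeDegree_le_sum hc i, sum_edgeDegree_le hc univ]

lemma IsEffective.of_comp_perm {d₀ : ℝ} {d : Fin 5 → ℝ} (σ : Equiv.Perm (Fin 5))
    (h : IsEffective d₀ (d ∘ σ)) : IsEffective d₀ d := by
  obtain ⟨c, hc, e, he, h₀, hd⟩ := h
  have hsum : ∑ i, ∑ j, c (σ.symm i) (σ.symm j) = ∑ i, ∑ j, c i j :=
    Fintype.sum_equiv σ.symm _ _ fun i => Fintype.sum_equiv σ.symm _ _ fun j => rfl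
  refine ⟨fun i j => c (σ.symm i) (σ.symm j), fun i j => hc (σ.symm i) (σ.symm j), e, he,
    by rw [hsum, h₀], fun k => ?_⟩
  simpa [hsum, edgeDegree_comp_perm] using hd (σ.symm k)

lemma exists_add_eq_of_le_add {s a b : ℝ} (hs : 0 ≤ s) (ha : 0 ≤ a) (hb : 0 ≤ b)
    (h : s ≤ a + b) : ∃ α β : ℝ, 0 ≤ α ∧ 0 ≤ β ∧ α ≤ a ∧ β ≤ b ∧ α + β = s := by
  refine ⟨min a s, s - min a s, le_min ha hs, sub_nonneg.mpr (min_le_right a s),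
    min_le_left a s, ?_, add_sub_cancel _ s⟩
  rcases min_cases a s with ⟨hmin, -⟩ | ⟨hmin, -⟩ <;> linarith

/-- If `r 0` is at least the sum of the other demands, a star centred at `0` covers them;
otherwise the surplus of the others is absorbed by the edges `{1, 2}` and `{3, 4}`. Any weight
left over is put on a loop. -/
lemma exists_edgeCover {r : Fin 5 → ℝ} (hr : 0 ≤ r) (hr_anti : Antitone r) {n : ℝ}
    (hr_le : r 0 ≤ n) (hr_sum : ∑ k, r k ≤ 2 * n) :
    ∃ c : Fin 5 → Fin 5 → ℝ, 0 ≤ c ∧ ∑ i, ∑ j, c i j = n ∧ ∀ k, r k ≤ edgeDegree c k := by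
  have h01 := hr_anti (show (0 : Fin 5) ≤ 1 by decide)
  have h12 := hr_anti (show (1 : Fin 5) ≤ 2 by decide)
  have h23 := hr_anti (show (2 : Fin 5) ≤ 3 by decide)
  have h34 := hr_anti (show (3 : Fin 5) ≤ 4 by decide)
  have h4 : 0 ≤ r 4 := hr 4
  rw [Fin.sum_univ_five] at hr_sum
  by_cases hstar : r 1 + r 2 + r 3 + r 4 ≤ r 0
  · refine ⟨!![n - (r 1 + r 2 + r 3 + r 4), r 1, r 2, r 3, r 4;
      0, 0, 0, 0, 0; 0, 0, 0, 0, 0; 0, 0, 0, 0, 0; 0, 0, 0, 0, 0], ?_, ?_, ?_⟩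
    · intro i j
      fin_cases i <;> fin_cases j <;> simp <;> linarith
    · simp [Fin.sum_univ_five]
      ring
    · intro k
      fin_cases k <;> simp [edgeDegree, Fin.sum_univ_five]
      linarith
  · obtain ⟨α, β, hα, hβ, hαr, hβr, hαβ⟩ :=
      exists_add_eq_of_le_add (s := (r 1 + r 2 + r 3 + r 4 - r 0) / 2) (by linarith) (hr 2) h4
        (by linarith)
    refine ⟨!![0, r 1 - α, r 2 - α, r 3 - β, r 4 - β;
      0, 0, α, 0, 0; 0, 0, 0, 0, 0; 0, 0, 0, 0, β;
      0, 0, 0, 0, n - (r 0 + r 1 + r 2 + r 3 + r 4) / 2], ?_, ?_, ?_⟩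
    · intro i j
      fin_cases i <;> fin_cases j <;> simp <;> linarith
    · simp [Fin.sum_univ_five]
      linarith
    · intro k
      fin_cases k <;> simp [edgeDegree, Fin.sum_univ_five] <;> linarith

lemma sum_max_zero_le_of_antitone {y : Fin 5 → ℝ} (hy : Antitone y) {B : ℝ} (h₀ : 0 ≤ B)
    (h₁ : y 0 ≤ B) (h₂ : y 0 + y 1 ≤ B) (h₃ : y 0 + y 1 + y 2 ≤ B)
    (h₄ : y 0 + y 1 + y 2 + y 3 ≤ B) (h₅ : y 0 + y 1 + y 2 + y 3 + y 4 ≤ B) :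
    ∑ k, max 0 (y k) ≤ B := by
  have h01 := hy (show (0 : Fin 5) ≤ 1 by decide)
  have h12 := hy (show (1 : Fin 5) ≤ 2 by decide)
  have h23 := hy (show (2 : Fin 5) ≤ 3 by decide)
  have h34 := hy (show (3 : Fin 5) ≤ 4 by decide)
  simp only [Fin.sum_univ_five, max_def]
  split_ifs <;> linarith

lemma isEffective_of_monotone {d₀ : ℝ} {d : Fin 5 → ℝ} (hd : Monotone d) (h₀ : 0 ≤ d₀)
    (hd₀ : 0 ≤ d 0) (h₃ : d₀ ≤ d 0 + d 1 + d 2) (h₄ : 2 * d₀ ≤ d 0 + d 1 + d 2 + d 3)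
    (h₅ : 3 * d₀ ≤ 2 * d 0 + d 1 + d 2 + d 3 + d 4) : IsEffective d₀ d := by
  have h01 := hd (show (0 : Fin 5) ≤ 1 by decide)
  have h34 := hd (show (3 : Fin 5) ≤ 4 by decide)
  have h04 := hd (show (0 : Fin 5) ≤ 4 by decide)
  have hsum := Fin.sum_univ_five d
  obtain ⟨e, he, he_sum, he_half, he_d0, he_3⟩ : ∃ e : ℝ, 0 ≤ e ∧ 3 * d₀ - ∑ k, d k ≤ e ∧
      e ≤ d₀ / 2 ∧ e ≤ d 0 ∧ e ≤ d 0 + d 1 + d 2 - d₀ :=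
    ⟨max 0 (3 * d₀ - ∑ k, d k), le_max_left _ _, le_max_right _ _,
      max_le (by linarith) (by linarith), max_le hd₀ (by linarith),
      max_le (by linarith) (by linarith)⟩
  have hy : Antitone fun k => d₀ - e - d k := fun i j hij => by linarith [hd hij]
  obtain ⟨c, hc, hN, hcover⟩ :=
    exists_edgeCover (r := fun k => max 0 (d₀ - e - d k)) (n := d₀ - 2 * e)
      (fun k => le_max_left _ _) (fun i j hij => max_le_max le_rfl (hy hij))
      (max_le (by linarith) (by linarith))
      (sum_max_zero_le_of_antitone hy (by linarith) (by linarith) (by linarith) (by linarith)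
        (by linarith) (by linarith))
  refine ⟨c, hc, e, he, by rw [hN]; ring, fun k => ?_⟩
  linarith [hcover k, le_max_right 0 (d₀ - e - d k)]

lemma SatisfiesConeInequalities.isEffective {d₀ : ℝ} {d : Fin 5 → ℝ}
    (h : SatisfiesConeInequalities d₀ d) : IsEffective d₀ d := by
  obtain ⟨h₀, hd, h₃, h₄, h₅⟩ := h
  let σ := Tuple.sort d
  have hσ : ∀ i j : Fin 5, i ≠ j → σ i ≠ σ j := fun i j => σ.injective.ne
  have h₅' : 3 * d₀ ≤ 2 * d (σ 0) + d (σ 1) + d (σ 2) + d (σ 3) + d (σ 4) := by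
    have := h₅ (σ 0)
    rw [sum_erase_eq_sub (mem_univ _), ← Equiv.sum_comp σ d, Fin.sum_univ_five] at this
    linarith
  exact IsEffective.of_comp_perm σ <| isEffective_of_monotone (Tuple.monotone_sort d) h₀ (hd _)
    (h₃ _ _ _ (hσ _ _ (by decide)) (hσ _ _ (by decide)) (hσ _ _ (by decide)))
    (h₄ _ _ _ _ (hσ _ _ (by decide)) (hσ _ _ (by decide)) (hσ _ _ (by decide))
      (hσ _ _ (by decide)) (hσ _ _ (by decide)) (hσ _ _ (by decide)))
    h₅'

/-- Proposition 2.6: a vector `v = (d0, d1, …, d5) ∈ ℝ⁶` is a finite nonnegative linear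
combination of the 21 vectors `genA i` (5 of them), `genB i` (5), `genC i j` for `i < j`
(10), and `genD` (1), if and only if `d0 ≥ 0`, `dᵢ ≥ 0`, `dᵢ + dⱼ + dₖ ≥ d0` for pairwise
distinct `i,j,k`, `dᵢ + dⱼ + dₖ + dₗ ≥ 2 d0` for pairwise distinct `i,j,k,l`, and
`2 dᵢ + ∑_{j ≠ i} dⱼ ≥ 3 d0` for each `i`. -/
theorem stmt11 (v : Fin 6 → ℝ) :
    (∃ (a b : Fin 5 → ℝ) (c : Fin 5 → Fin 5 → ℝ) (e : ℝ),
      (∀ i, 0 ≤ a i) ∧ (∀ i, 0 ≤ b i) ∧ (∀ i j, 0 ≤ c i j) ∧ 0 ≤ e ∧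
      v = (∑ i, a i • genA i) + (∑ i, b i • genB i) +
          (∑ i, ∑ j ∈ Finset.univ.filter (fun j => i < j), c i j • genC i j) + e • genD)
    ↔ (0 ≤ v 0 ∧ (∀ i : Fin 5, 0 ≤ v i.succ) ∧
       (∀ i j k : Fin 5, i ≠ j → i ≠ k → j ≠ k →
          v 0 ≤ v i.succ + v j.succ + v k.succ) ∧
       (∀ i j k l : Fin 5, i ≠ j → i ≠ k → i ≠ l → j ≠ k → j ≠ l → k ≠ l →
          2 * v 0 ≤ v i.succ + v j.succ + v k.succ + v l.succ) ∧
       (∀ i : Fin 5, 3 * v 0 ≤ 2 * v i.succ + ∑ j ∈ Finset.univ.erase i, v j.succ)) := by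
  rw [exists_genB_genC_iff_exists_conePoint, exists_conePoint_iff_isEffective]
  exact ⟨IsEffective.satisfiesConeInequalities, SatisfiesConeInequalities.isEffective⟩
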